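/- Let f be convex with L_f-Lipschitz gradient, g proper lsc convex, 0 < γ < 1/L_f, and suppose φ = f + g satisfies quadratic growth with constants (μ, ν). Then for every x with φ_γ(x) ≤ φ⋆ + ν, the forward-backward envelope satisfies φ_γ(x) − φ⋆ ≤ γ[1/2 + (1 + 2/(γμ))(1 + γL_f)²]‖R_γ(x)‖², where R_γ(x) = (x − T_γ(x))/γ. -/

import Mathlib

set_option linter.unusedVariables false
set_option maxHeartbeats 1000000
noncomputable section

/-- Euclidean space ℝⁿ. -/
abbrev Eucl (n : ℕ) := EuclideanSpace ℝ (Fin n)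

/-- A proper extended-real-valued function: not identically +∞ and nowhere -∞. -/
def ProperFun {n : ℕ} (g : Eucl n → EReal) : Prop := (∃ x, g x ≠ ⊤) ∧ ∀ x, g x ≠ ⊥

/-- Convexity for extended-real-valued functions. -/
def ConvexFun {n : ℕ} (g : Eucl n → EReal) : Prop :=
  ∀ x y : Eucl n, ∀ a b : ℝ, 0 ≤ a → 0 ≤ b → a + b = 1 →
    g (a • x + b • y) ≤ (a : EReal) * g x + (b : EReal) * g y

/-- `p` is the proximal point `prox_{γ g}(y)`, i.e. it minimizes
`w ↦ g w + (1/(2γ))‖w - y‖²`. -/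
def IsProx {n : ℕ} (g : Eucl n → EReal) (γ : ℝ) (y p : Eucl n) : Prop :=
  ∀ w, g p + ((1/(2*γ) * ‖p - y‖^2 : ℝ) : EReal) ≤ g w + ((1/(2*γ) * ‖w - y‖^2 : ℝ) : EReal)

/-- The Moreau envelope `g^γ(x) = inf_w { g w + (1/(2γ))‖w - x‖² }`. -/
def moreauEnv {n : ℕ} (g : Eucl n → EReal) (γ : ℝ) (x : Eucl n) : EReal :=
  ⨅ w, g w + ((1/(2*γ) * ‖w - x‖^2 : ℝ) : EReal)

/-- The convex subdifferential of an extended-real-valued function. -/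
def subdiff {n : ℕ} (φ : Eucl n → EReal) (x : Eucl n) : Set (Eucl n) :=
  {v | ∀ z, φ x + ((inner ℝ v (z - x) : ℝ) : EReal) ≤ φ z}

/-- The forward-backward envelope
`φ_γ(x) = inf_w { f x + ⟨∇f x, w - x⟩ + (1/(2γ))‖w - x‖² + g w }`. -/
def fbe {n : ℕ} (f : Eucl n → ℝ) (f' : Eucl n → Eucl n) (g : Eucl n → EReal) (γ : ℝ)
    (x : Eucl n) : EReal :=
  ⨅ w, ((f x + (inner ℝ (f' x) (w - x) : ℝ) + 1/(2*γ) * ‖w - x‖^2 : ℝ) : EReal) + g w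

/-- The distance (in `EReal`, so `⊤` if the set is empty) from `0` to a set of vectors. -/
def distZero {n : ℕ} (S : Set (Eucl n)) : EReal := ⨅ v ∈ S, ((‖v‖ : ℝ) : EReal)

/-- Derivative of `t ↦ f (x + t • d)`. -/
lemma line_hasDerivAt {n : ℕ} (f : Eucl n → ℝ) (f' : Eucl n → Eucl n)
    (hgrad : ∀ x, HasGradientAt f (f' x) x) (x d : Eucl n) (t : ℝ) :
    HasDerivAt (fun s : ℝ => f (x + s • d)) (inner ℝ (f' (x + t • d)) d : ℝ) t := by
  have hL : HasDerivAt (fun s : ℝ => x + s • d) d t := by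
    simpa using ((hasDerivAt_id t).smul_const d).const_add x
  have hf := (hgrad (x + t • d)).hasFDerivAt
  have := hf.comp_hasDerivAt t hL
  exact this

/-- Gradient inequality for convex functions. -/
lemma grad_ineq {n : ℕ} (f : Eucl n → ℝ) (f' : Eucl n → Eucl n)
    (hconvf : ConvexOn ℝ Set.univ f) (hgrad : ∀ x, HasGradientAt f (f' x) x)
    (x y : Eucl n) : f x + (inner ℝ (f' x) (y - x) : ℝ) ≤ f y := by
  set d := y - x with hd
  have hder : HasDerivAt (fun s : ℝ => f (x + s • d)) (inner ℝ (f' x) d : ℝ) 0 := by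
    simpa using line_hasDerivAt f f' hgrad x d 0
  have hslope := hasDerivAt_iff_tendsto_slope.1 hder
  have hslope' : Filter.Tendsto (slope (fun s : ℝ => f (x + s • d)) 0) (nhdsWithin 0 (Set.Ioi 0))
      (nhds (inner ℝ (f' x) d : ℝ)) :=
    hslope.mono_left (nhdsWithin_mono 0 (fun t ht => ne_of_gt ht))
  have hbound : ∀ᶠ t in nhdsWithin (0:ℝ) (Set.Ioi 0),
      slope (fun s : ℝ => f (x + s • d)) 0 t ≤ f y - f x := by
    filter_upwards [Ioc_mem_nhdsGT_of_mem (Set.left_mem_Ico.2 one_pos)] with t ht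
    have ht0 : 0 < t := ht.1
    have ht1 : t ≤ 1 := ht.2
    have hxty : x + t • d = (1 - t) • x + t • y := by
      rw [hd, smul_sub, sub_smul, one_smul]; abel
    have hconv := hconvf.2 (Set.mem_univ x) (Set.mem_univ y)
      (by linarith : (0:ℝ) ≤ 1 - t) (le_of_lt ht0) (by ring)
    rw [← hxty] at hconv
    rw [slope_def_field]
    have hthis : f (x + t • d) ≤ (1 - t) * f x + t * f y := hconv
    have h0 : f (x + (0:ℝ) • d) = f x := by simp
    rw [h0, sub_zero, div_le_iff₀ ht0]
    nlinarith [hthis]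
  have := le_of_tendsto hslope' hbound
  linarith

/-- Descent lemma. -/
lemma descent_lemma {n : ℕ} (f : Eucl n → ℝ) (f' : Eucl n → Eucl n)
    (hgrad : ∀ x, HasGradientAt f (f' x) x) (Lf : ℝ) (hLf : 0 ≤ Lf)
    (hlip : LipschitzWith (Real.toNNReal Lf) f') (x y : Eucl n) :
    f y ≤ f x + (inner ℝ (f' x) (y - x) : ℝ) + Lf/2 * ‖y - x‖^2 := by
  set d := y - x with hd
  set G : ℝ → ℝ := fun t => f (x + t • d) - t * (inner ℝ (f' x) d : ℝ) - Lf/2 * t^2 * ‖d‖^2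
    with hG
  have hderG : ∀ t : ℝ, HasDerivAt G
      ((inner ℝ (f' (x + t • d)) d : ℝ) - (inner ℝ (f' x) d : ℝ) - Lf * t * ‖d‖^2) t := by
    intro t
    have h1 := line_hasDerivAt f f' hgrad x d t
    have h2 : HasDerivAt (fun t : ℝ => t * (inner ℝ (f' x) d : ℝ)) (inner ℝ (f' x) d : ℝ) t := by
      simpa using (hasDerivAt_id t).mul_const (inner ℝ (f' x) d : ℝ)
    have h3 : HasDerivAt (fun t : ℝ => Lf/2 * t^2 * ‖d‖^2) (Lf * t * ‖d‖^2) t := by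
      have : HasDerivAt (fun t : ℝ => t^2) (2 * t) t := by
        simpa using hasDerivAt_pow 2 t
      have h := (this.const_mul (Lf/2)).mul_const (‖d‖^2)
      have e : Lf * t * ‖d‖^2 = Lf/2 * (2*t) * ‖d‖^2 := by ring
      rw [e]; exact h
    exact (h1.sub h2).sub h3
  have hdiff : Differentiable ℝ G := fun t => (hderG t).differentiableAt
  have hanti : AntitoneOn G (Set.Icc 0 1) := by
    apply antitoneOn_of_deriv_nonpos (convex_Icc 0 1) hdiff.continuous.continuousOn
      hdiff.differentiableOn
    intro t ht
    rw [interior_Icc] at ht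
    rw [(hderG t).deriv]
    have hlipd : ‖f' (x + t • d) - f' x‖ ≤ Lf * (t * ‖d‖) := by
      have := hlip.dist_le_mul (x + t • d) x
      rw [dist_eq_norm] at this
      have he : dist (x + t • d) x = ‖t • d‖ := by
        rw [dist_eq_norm]; congr 1; abel
      rw [he] at this
      have h2 : ‖t • d‖ = t * ‖d‖ := by
        rw [norm_smul, Real.norm_eq_abs, abs_of_pos ht.1]
      rw [h2] at this
      calc ‖f' (x + t • d) - f' x‖ ≤ (Real.toNNReal Lf : ℝ) * (t * ‖d‖) := this
        _ = Lf * (t * ‖d‖) := by rw [Real.coe_toNNReal _ hLf]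
    have hinner : (inner ℝ (f' (x + t • d)) d : ℝ) - (inner ℝ (f' x) d : ℝ)
        ≤ Lf * t * ‖d‖^2 := by
      have h1 : (inner ℝ (f' (x + t • d)) d : ℝ) - (inner ℝ (f' x) d : ℝ)
          = (inner ℝ (f' (x + t • d) - f' x) d : ℝ) := by rw [inner_sub_left]
      rw [h1]
      calc (inner ℝ (f' (x + t • d) - f' x) d : ℝ) ≤ ‖f' (x + t • d) - f' x‖ * ‖d‖ :=
            real_inner_le_norm _ _
        _ ≤ Lf * (t * ‖d‖) * ‖d‖ := by
            apply mul_le_mul_of_nonneg_right hlipd (norm_nonneg _)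
        _ = Lf * t * ‖d‖^2 := by ring
    linarith
  have := hanti (Set.left_mem_Icc.2 zero_le_one) (Set.right_mem_Icc.2 zero_le_one) zero_le_one
  simp only [hG] at this
  simp only [zero_smul, add_zero, one_smul, zero_mul, sub_zero, one_pow, mul_one,
    zero_pow, mul_zero] at this
  have hy : x + d = y := by rw [hd]; abel
  rw [hy] at this
  linarith

/-- The prox point satisfies the subgradient inequality for `g`. -/
lemma prox_subgrad {n : ℕ} (g : Eucl n → EReal) (hb : ∀ x, g x ≠ ⊥) (hgconv : ConvexFun g)
    (γ : ℝ) (hγ : 0 < γ) (y p : Eucl n) (hp : IsProx g γ y p)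
    (gp : ℝ) (hgp : g p = (gp : EReal)) (w : Eucl n) (gw : ℝ) (hgw : g w = (gw : EReal)) :
    gp + (inner ℝ (γ⁻¹ • (y - p)) (w - p) : ℝ) ≤ gw := by
  set d := w - p with hd
  have key : ∀ t : ℝ, 0 < t → t ≤ 1 →
      gp + (inner ℝ (γ⁻¹ • (y - p)) d : ℝ) ≤ gw + (1/(2*γ)) * t * ‖d‖^2 := by
    intro t ht0 ht1
    set wt := p + t • d with hwt
    have hwtc : wt = (1 - t) • p + t • w := by
      rw [hwt, hd, smul_sub, sub_smul, one_smul]; abel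
    have hconv := hgconv p w (1 - t) t (by linarith) (le_of_lt ht0) (by ring)
    rw [← hwtc, hgp, hgw] at hconv
    have hcoe : ((1 - t : ℝ) : EReal) * (gp : EReal) + (t : EReal) * (gw : EReal)
        = (((1 - t) * gp + t * gw : ℝ) : EReal) := by
      rw [← EReal.coe_mul, ← EReal.coe_mul, ← EReal.coe_add]
    rw [hcoe] at hconv
    have hwtne : g wt ≠ ⊤ := fun h => by
      rw [h] at hconv; exact (EReal.coe_ne_top _) (top_le_iff.1 hconv)
    set gwt := (g wt).toReal with hgwt
    have hgwtc : g wt = (gwt : EReal) := (EReal.coe_toReal hwtne (hb wt)).symm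
    rw [hgwtc] at hconv
    have hconvR : gwt ≤ (1 - t) * gp + t * gw := EReal.coe_le_coe_iff.1 hconv
    have hprox := hp wt
    rw [hgp, hgwtc, ← EReal.coe_add, ← EReal.coe_add] at hprox
    have hproxR : gp + 1/(2*γ) * ‖p - y‖^2 ≤ gwt + 1/(2*γ) * ‖wt - y‖^2 :=
      EReal.coe_le_coe_iff.1 hprox
    have hexp : ‖wt - y‖^2 = ‖p - y‖^2 + 2 * t * (inner ℝ (p - y) d : ℝ) + t^2 * ‖d‖^2 := by
      have h1 : wt - y = (p - y) + t • d := by rw [hwt]; abel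
      rw [h1, norm_add_sq_real, real_inner_smul_right, norm_smul, Real.norm_eq_abs,
        abs_of_pos ht0, mul_pow]
      ring
    rw [hexp] at hproxR
    have hip : (inner ℝ (γ⁻¹ • (y - p)) d : ℝ) = -(γ⁻¹ * (inner ℝ (p - y) d : ℝ)) := by
      rw [real_inner_smul_left]
      have : (inner ℝ (y - p) d : ℝ) = -(inner ℝ (p - y) d : ℝ) := by
        rw [← inner_neg_left]; congr 1; abel
      rw [this]; ring
    rw [hip]
    set c : ℝ := 1/(2*γ) with hc
    set ip : ℝ := (inner ℝ (p - y) d : ℝ) with hipd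
    have hcγ : γ⁻¹ = 2 * c := by rw [hc]; field_simp
    have h5 : t * 0 ≤ t * (gw - gp + 2 * c * ip + c * t * ‖d‖^2) := by
      nlinarith [hconvR, hproxR]
    have h7 : (0:ℝ) ≤ gw - gp + 2 * c * ip + c * t * ‖d‖^2 :=
      le_of_mul_le_mul_left h5 ht0
    rw [hcγ]
    linarith
  have h2 : ∀ ε > 0, gp + (inner ℝ (γ⁻¹ • (y - p)) d : ℝ) ≤ gw + ε := by
    intro ε hε
    set K := (1/(2*γ)) * ‖d‖^2 with hK
    have hK0 : 0 ≤ K := by positivity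
    set t := min 1 (ε / (K + 1)) with ht
    have ht0 : 0 < t := lt_min one_pos (div_pos hε (by linarith))
    have ht1 : t ≤ 1 := min_le_left _ _
    have := key t ht0 ht1
    have htK : 1/(2*γ) * t * ‖d‖^2 ≤ ε := by
      have h3 : t ≤ ε / (K + 1) := min_le_right _ _
      have h4 : t * (K + 1) ≤ ε := by
        rw [← le_div_iff₀ (by linarith : (0:ℝ) < K + 1)]; exact h3
      nlinarith [ht0.le]
    linarith
  linarith [le_of_forall_pos_le_add h2]

/-- under quadratic growth of `φ` with constants (μ, ν), for every `x` with
`φ_γ(x) ≤ φ⋆ + ν`, `φ_γ(x) − φ⋆ ≤ γ[1/2 + (1 + 2/(γμ))(1 + γL_f)²]‖R_γ(x)‖²`. -/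
theorem fbe_le_residual_sq {n : ℕ} (f : Eucl n → ℝ) (f' : Eucl n → Eucl n)
    (hconvf : ConvexOn ℝ Set.univ f) (hgrad : ∀ x, HasGradientAt f (f' x) x)
    (Lf : ℝ) (hLf : 0 < Lf) (hlip : LipschitzWith (Real.toNNReal Lf) f')
    (g : Eucl n → EReal) (hgp : ProperFun g) (hglsc : LowerSemicontinuous g)
    (hgconv : ConvexFun g)
    (γ : ℝ) (hγ : 0 < γ) (hγL : γ < 1/Lf)
    (T : Eucl n → Eucl n) (hT : ∀ x, IsProx g γ (x - γ • f' x) (T x))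
    (Xstar : Set (Eucl n))
    (hX : Xstar = {z | ∀ y, (f z : EReal) + g z ≤ (f y : EReal) + g y}) (hne : Xstar.Nonempty)
    (μ ν : ℝ) (hμ : 0 < μ) (hν : 0 < ν)
    (hQG : ∀ x, (f x : EReal) + g x ≤ (⨅ y, (f y : EReal) + g y) + (ν : EReal) →
      (⨅ y, (f y : EReal) + g y) + ((μ/2 * (Metric.infDist x Xstar)^2 : ℝ) : EReal)
        ≤ (f x : EReal) + g x) :
    ∀ x : Eucl n, fbe f f' g γ x ≤ (⨅ y, (f y : EReal) + g y) + (ν : EReal) →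
      fbe f f' g γ x ≤ (⨅ y, (f y : EReal) + g y)
        + ((γ * (1/2 + (1 + 2/(γ*μ)) * (1 + γ*Lf)^2) * ‖γ⁻¹ • (x - T x)‖^2 : ℝ) : EReal) := by
  intro x hx
  have hγ0 : γ ≠ 0 := ne_of_gt hγ
  obtain ⟨zs, hzsmem⟩ := hne
  have hzsmin : ∀ y, (f zs : EReal) + g zs ≤ (f y : EReal) + g y := by
    rw [hX] at hzsmem; exact hzsmem
  have hΦzs : (⨅ y, (f y : EReal) + g y) = (f zs : EReal) + g zs :=
    le_antisymm (iInf_le _ zs) (le_iInf hzsmin)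
  by_cases hgt : g zs = ⊤
  · have htop : (⨅ y, (f y : EReal) + g y) = ⊤ := by
      rw [hΦzs, hgt]; exact EReal.add_top_of_ne_bot (EReal.coe_ne_bot _)
    rw [htop, EReal.top_add_coe]
    exact le_top
  -- the infimum is a real number φs
  have hgzs : ((g zs).toReal : EReal) = g zs := EReal.coe_toReal hgt (hgp.2 zs)
  set φs : ℝ := f zs + (g zs).toReal with hφs
  have hΦsR : (⨅ y, (f y : EReal) + g y) = (φs : EReal) := by
    rw [hΦzs, ← hgzs, ← EReal.coe_add]
  -- fbe as a minimum attained at x̄ = T x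
  set xb := T x with hxb
  set y₀ := x - γ • f' x with hy₀
  have hkey : ∀ w : Eucl n, f x + (inner ℝ (f' x) (w - x) : ℝ) + 1/(2*γ) * ‖w - x‖^2
      = (f x - γ/2 * ‖f' x‖^2) + 1/(2*γ) * ‖w - y₀‖^2 := by
    intro w
    have h1 : w - y₀ = (w - x) + γ • f' x := by rw [hy₀]; abel
    rw [h1, norm_add_sq_real, real_inner_smul_right, norm_smul, Real.norm_eq_abs,
      abs_of_pos hγ, mul_pow, real_inner_comm]
    field_simp
    ring
  have hterm : ∀ w : Eucl n,
      ((f x + (inner ℝ (f' x) (w - x) : ℝ) + 1/(2*γ) * ‖w - x‖^2 : ℝ) : EReal) + g w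
      = ((f x - γ/2 * ‖f' x‖^2 : ℝ) : EReal) + (g w + ((1/(2*γ) * ‖w - y₀‖^2 : ℝ) : EReal)) := by
    intro w
    rw [hkey w, EReal.coe_add, add_assoc]
    congr 1
    exact add_comm _ _
  have hfbeq : fbe f f' g γ x
      = ((f x - γ/2 * ‖f' x‖^2 : ℝ) : EReal) + (g xb + ((1/(2*γ) * ‖xb - y₀‖^2 : ℝ) : EReal)) := by
    unfold fbe
    rw [iInf_congr hterm]
    refine le_antisymm (iInf_le _ xb) (le_iInf fun w => ?_)
    exact add_le_add le_rfl (hT x w)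
  have hν' : (⨅ y, (f y : EReal) + g y) + (ν : EReal) = ((φs + ν : ℝ) : EReal) := by
    rw [hΦsR, ← EReal.coe_add]
  rw [hν'] at hx
  rw [hfbeq] at hx
  have hgxbt : g xb ≠ ⊤ := by
    intro h
    rw [h, EReal.top_add_coe, EReal.add_top_of_ne_bot (EReal.coe_ne_bot _)] at hx
    exact (EReal.coe_ne_top _) (top_le_iff.1 hx)
  set gb := (g xb).toReal with hgb
  have hgxb : g xb = (gb : EReal) := (EReal.coe_toReal hgxbt (hgp.2 xb)).symm
  set F : ℝ := (f x - γ/2 * ‖f' x‖^2) + (gb + 1/(2*γ) * ‖xb - y₀‖^2) with hF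
  have hfbeR : fbe f f' g γ x = (F : EReal) := by
    rw [hfbeq, hgxb, ← EReal.coe_add, ← EReal.coe_add]
  have hFalt : F = f x + (inner ℝ (f' x) (xb - x) : ℝ) + 1/(2*γ) * ‖xb - x‖^2 + gb := by
    rw [hF]
    have := hkey xb
    linarith
  have hxR : F ≤ φs + ν := by
    rw [hgxb, ← EReal.coe_add, ← EReal.coe_add] at hx
    exact EReal.coe_le_coe_iff.1 hx
  -- reduce goal to reals
  rw [hfbeR, hΦsR, ← EReal.coe_add, EReal.coe_le_coe_iff]
  set nr := ‖γ⁻¹ • (x - xb)‖ with hnr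
  have hnx : ‖xb - x‖ = γ * nr := by
    rw [hnr, norm_smul, Real.norm_eq_abs, abs_of_pos (inv_pos.2 hγ), norm_sub_rev]
    field_simp
  have hγL1 : γ * Lf ≤ 1 := by
    have := (lt_div_iff₀ hLf).1 hγL
    linarith
  -- descent lemma at x
  have hdesc := descent_lemma f f' hgrad Lf hLf.le hlip x xb
  have hLc : Lf/2 * ‖xb - x‖^2 ≤ 1/(2*γ) * ‖xb - x‖^2 := by
    apply mul_le_mul_of_nonneg_right _ (sq_nonneg _)
    rw [div_le_div_iff₀ two_pos (by linarith : (0:ℝ) < 2*γ)]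
    nlinarith
  have hPhixb : f xb + gb ≤ F := by rw [hFalt]; linarith
  -- quadratic growth at xb
  have hQGx := hQG xb (by
    rw [hgxb, ← EReal.coe_add, hν', EReal.coe_le_coe_iff]
    linarith)
  rw [hΦsR, hgxb, ← EReal.coe_add, ← EReal.coe_add, EReal.coe_le_coe_iff] at hQGx
  set D := Metric.infDist xb Xstar with hD
  -- subgradient vector
  set v := (f' xb - f' x) + γ⁻¹ • (x - xb) with hv
  have hvu : f' xb + γ⁻¹ • (y₀ - xb) = v := by
    rw [hv, hy₀]
    have h8 : γ⁻¹ • (x - γ • f' x - xb) = γ⁻¹ • (x - xb) - f' x := by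
      rw [show x - γ • f' x - xb = (x - xb) - γ • f' x by abel, smul_sub, smul_smul,
        inv_mul_cancel₀ hγ0, one_smul]
    rw [h8]; abel
  -- the per-minimizer bound
  have hzbound : ∀ z ∈ Xstar, (f xb + gb) - φs ≤ ‖v‖ * dist xb z := by
    intro z hz
    have hzmin : ∀ y, (f z : EReal) + g z ≤ (f y : EReal) + g y := by
      rw [hX] at hz; exact hz
    have h1 : (f z : EReal) + g z = (φs : EReal) := by
      refine le_antisymm ?_ ?_
      · rw [← hΦsR, hΦzs]; exact hzmin zs
      · rw [← hΦsR]; exact iInf_le _ z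
    have hgznt : g z ≠ ⊤ := by
      intro h
      rw [h, EReal.add_top_of_ne_bot (EReal.coe_ne_bot _)] at h1
      exact (EReal.coe_ne_top _) h1.symm
    have hgz : ((g z).toReal : EReal) = g z := EReal.coe_toReal hgznt (hgp.2 z)
    have hφz : f z + (g z).toReal = φs := by
      rw [← hgz, ← EReal.coe_add] at h1
      exact EReal.coe_eq_coe_iff.1 h1
    have hf1 : f xb + (inner ℝ (f' xb) (z - xb) : ℝ) ≤ f z := grad_ineq f f' hconvf hgrad xb z
    have hg1 : gb + (inner ℝ (γ⁻¹ • (y₀ - xb)) (z - xb) : ℝ) ≤ (g z).toReal :=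
      prox_subgrad g hgp.2 hgconv γ hγ y₀ xb (hT x) gb hgxb z (g z).toReal hgz.symm
    have hsum : f xb + gb + (inner ℝ v (z - xb) : ℝ) ≤ φs := by
      have h9 : (inner ℝ v (z - xb) : ℝ)
          = (inner ℝ (f' xb) (z - xb) : ℝ) + (inner ℝ (γ⁻¹ • (y₀ - xb)) (z - xb) : ℝ) := by
        rw [← hvu, inner_add_left]
      rw [h9]; linarith
    have hcs : -(inner ℝ v (z - xb) : ℝ) ≤ ‖v‖ * ‖xb - z‖ := by
      have h2 : -(inner ℝ v (z - xb) : ℝ) = (inner ℝ v (xb - z) : ℝ) := by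
        rw [← inner_neg_right]; congr 1; abel
      rw [h2]
      exact real_inner_le_norm _ _
    rw [dist_eq_norm]
    linarith
  set P := f xb + gb - φs with hP
  have hP0 : 0 ≤ P := by
    have h10 : (φs : EReal) ≤ (f xb : EReal) + g xb := by
      rw [← hΦsR]; exact iInf_le _ xb
    rw [hgxb, ← EReal.coe_add, EReal.coe_le_coe_iff] at h10
    rw [hP]; linarith
  have hD0 : 0 ≤ D := Metric.infDist_nonneg
  have hPD : P ≤ ‖v‖ * D := by
    rcases eq_or_lt_of_le (norm_nonneg v) with hv0 | hv0
    · have := hzbound zs hzsmem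
      rw [← hv0, zero_mul] at this ⊢
      rw [hP]; linarith
    · have hle : P / ‖v‖ ≤ D := by
        by_contra h
        push_neg at h
        obtain ⟨z, hz, hdz⟩ := (Metric.infDist_lt_iff ⟨zs, hzsmem⟩).1 h
        have hb := hzbound z hz
        rw [hP] at hb
        have hdz2 := (lt_div_iff₀ hv0).1 hdz
        nlinarith
      calc P = ‖v‖ * (P / ‖v‖) := by field_simp
        _ ≤ ‖v‖ * D := mul_le_mul_of_nonneg_left hle hv0.le
  have hQP : μ/2 * D^2 ≤ P := by rw [hP]; linarith
  have hkey2 : μ * P ≤ 2 * ‖v‖^2 := by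
    nlinarith [sq_nonneg (μ * D - 2 * ‖v‖), hPD, hQP, hP0, hD0, norm_nonneg v]
  -- bound on ‖v‖
  have hvb : ‖v‖ ≤ (1 + γ*Lf) * nr := by
    have hlg : ‖f' xb - f' x‖ ≤ Lf * ‖xb - x‖ := by
      have := hlip.dist_le_mul xb x
      rw [dist_eq_norm, dist_eq_norm, Real.coe_toNNReal _ hLf.le] at this
      exact this
    calc ‖v‖ ≤ ‖f' xb - f' x‖ + ‖γ⁻¹ • (x - xb)‖ := by rw [hv]; exact norm_add_le _ _
      _ ≤ Lf * ‖xb - x‖ + nr := by rw [← hnr]; linarith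
      _ = Lf * (γ * nr) + nr := by rw [hnx]
      _ = (1 + γ*Lf) * nr := by ring
  have hnr0 : 0 ≤ nr := norm_nonneg _
  have hgi := grad_ineq f f' hconvf hgrad x xb
  have hq : 1/(2*γ) * ‖xb - x‖^2 = γ/2 * nr^2 := by
    rw [hnx]; field_simp
  have hF2 : F ≤ φs + P + γ/2 * nr^2 := by
    rw [hFalt, hP, ← hq]; linarith
  have hPfin : P ≤ 2 * (1 + γ*Lf)^2 * nr^2 / μ := by
    rw [le_div_iff₀ hμ]
    nlinarith [hkey2, hvb, norm_nonneg v, mul_self_nonneg ((1 + γ*Lf) * nr)]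
  have hgoal : γ * (1/2 + (1 + 2/(γ*μ)) * (1 + γ*Lf)^2) * nr^2
      = γ/2 * nr^2 + γ * (1 + γ*Lf)^2 * nr^2 + 2 * (1 + γ*Lf)^2 * nr^2 / μ := by
    field_simp
    ring
  rw [hgoal]
  nlinarith [hF2, hPfin, mul_nonneg (mul_nonneg hγ.le (sq_nonneg (1 + γ*Lf))) (sq_nonneg nr)]
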